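/- In the algebra A' = k⟨x,y,z⟩/(yz−αzy+x², zx−αxz, xy−αyx), if α is a primitive ℓ-th root of unity (ℓ = |α| finite), then x^ℓ, y^ℓ, and z^ℓ are central elements of A'. -/

import Mathlib

noncomputable section

/-- Defining relations of the Type S' Calabi–Yau quantum polynomial algebra
`A' = k⟨x,y,z⟩/(yz - αzy + x², zx - αxz, xy - αyx)`. -/
inductive SRel {k : Type} [Field k] (α : k) :
    FreeAlgebra k (Fin 3) → FreeAlgebra k (Fin 3) → Prop
  | g1 : SRel α (FreeAlgebra.ι k 1 * FreeAlgebra.ι k 2)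
      (α • (FreeAlgebra.ι k 2 * FreeAlgebra.ι k 1) - FreeAlgebra.ι k 0 * FreeAlgebra.ι k 0)
  | g2 : SRel α (FreeAlgebra.ι k 2 * FreeAlgebra.ι k 0)
      (α • (FreeAlgebra.ι k 0 * FreeAlgebra.ι k 2))
  | g3 : SRel α (FreeAlgebra.ι k 0 * FreeAlgebra.ι k 1)
      (α • (FreeAlgebra.ι k 1 * FreeAlgebra.ι k 0))

/-- The image of `x` in `A'`. -/
def SX {k : Type} [Field k] (α : k) : RingQuot (SRel α) :=
  RingQuot.mkAlgHom k (SRel α) (FreeAlgebra.ι k 0)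

/-- The image of `y` in `A'`. -/
def SY {k : Type} [Field k] (α : k) : RingQuot (SRel α) :=
  RingQuot.mkAlgHom k (SRel α) (FreeAlgebra.ι k 1)

/-- The image of `z` in `A'`. -/
def SZ {k : Type} [Field k] (α : k) : RingQuot (SRel α) :=
  RingQuot.mkAlgHom k (SRel α) (FreeAlgebra.ι k 2)

/-- The central element `g = xyz + (1-α³)⁻¹ x³` of `A'`. -/
def SG {k : Type} [Field k] (α : k) : RingQuot (SRel α) :=
  SX α * SY α * SZ α + (1 - α ^ 3)⁻¹ • (SX α) ^ 3

/-! Apart from `y z = α z y - x²`, any two generators commute up to a power of `α`, so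
`α ^ ℓ = 1` already makes `x ^ ℓ` central and makes `y ^ ℓ`, `z ^ ℓ` commute with `x`. Pushing `y`
past `z` leaves the correction `x²`, which commutes with `y` up to `α²`; by induction
`y ^ n z = α ^ n z y ^ n - (∑_{i < n} α ^ (3 i)) y ^ (n - 1) x²`, and symmetrically for `y z ^ n`.
For `α ^ ℓ = 1 ≠ α ^ 3` this geometric sum vanishes at `n = ℓ`. -/

open Finset MulOpposite

section TwistedCommutation

variable {R A : Type*} [CommRing R] [Ring A] [Algebra R A] {a b q : A} {c d : R}

lemma pow_mul_eq_smul_mul_pow (h : a * b = c • (b * a)) (n : ℕ) :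
    a ^ n * b = c ^ n • (b * a ^ n) := by
  induction n with
  | zero => simp
  | succ n ih =>
    rw [pow_succ', mul_assoc, ih, mul_smul_comm, ← mul_assoc, h, smul_mul_assoc, smul_smul,
      mul_assoc, ← pow_succ, ← pow_succ']

lemma mul_pow_eq_smul_pow_mul (h : a * b = c • (b * a)) (n : ℕ) :
    a * b ^ n = c ^ n • (b ^ n * a) := by
  induction n with
  | zero => simp
  | succ n ih =>
    rw [pow_succ, ← mul_assoc, ih, smul_mul_assoc, mul_assoc, h, mul_smul_comm, smul_smul,
      ← mul_assoc, ← pow_succ]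

lemma pow_succ_mul_eq_smul_mul_pow_sub (h : a * b = c • (b * a) - q) (hq : q * a = d • (a * q))
    (n : ℕ) :
    a ^ (n + 1) * b =
      c ^ (n + 1) • (b * a ^ (n + 1)) - (∑ i ∈ range (n + 1), (c * d) ^ i) • (a ^ n * q) := by
  induction n with
  | zero => simpa using h
  | succ n ih =>
    calc a ^ (n + 2) * b = c • ((a ^ (n + 1) * b) * a) - a ^ (n + 1) * q := by
          rw [pow_succ a (n + 1), mul_assoc, h, mul_sub, mul_smul_comm, mul_assoc]
      _ = c ^ (n + 2) • (b * a ^ (n + 2))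
            - (c * d * ∑ i ∈ range (n + 1), (c * d) ^ i + 1) • (a ^ (n + 1) * q) := by
        rw [ih, sub_mul, smul_mul_assoc, smul_mul_assoc, mul_assoc b, ← pow_succ,
          mul_assoc (a ^ n), hq, mul_smul_comm, ← mul_assoc (a ^ n), ← pow_succ]
        module
      _ = _ := by rw [← geom_sum_succ]

lemma mul_pow_succ_eq_smul_pow_mul_sub (h : a * b = c • (b * a) - q) (hq : b * q = d • (q * b))
    (n : ℕ) :
    a * b ^ (n + 1) =
      c ^ (n + 1) • (b ^ (n + 1) * a) - (∑ i ∈ range (n + 1), (c * d) ^ i) • (q * b ^ n) := by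
  apply op_injective
  simp only [op_mul, op_pow, op_sub, op_smul]
  refine pow_succ_mul_eq_smul_mul_pow_sub ?_ ?_ n
  · simpa only [op_mul, op_sub, op_smul] using congrArg op h
  · simpa only [op_mul, op_smul] using congrArg op hq

lemma commute_pow_left_of_mul_eq_smul {n : ℕ} (h : a * b = c • (b * a)) (hc : c ^ n = 1) :
    Commute (a ^ n) b := by
  rw [Commute, SemiconjBy, pow_mul_eq_smul_mul_pow h, hc, one_smul]

lemma commute_pow_right_of_mul_eq_smul {n : ℕ} (h : a * b = c • (b * a)) (hc : c ^ n = 1) :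
    Commute a (b ^ n) := by
  rw [Commute, SemiconjBy, mul_pow_eq_smul_pow_mul h, hc, one_smul]

variable [IsDomain R]

lemma geom_sum_eq_zero_of_pow_eq_one {x : R} {n : ℕ} (hx : x ^ n = 1) (hx1 : x ≠ 1) :
    ∑ i ∈ range n, x ^ i = 0 := by
  have key := geom_sum_mul x n
  rw [hx, sub_self] at key
  exact (mul_eq_zero.1 key).resolve_right (sub_ne_zero.2 hx1)

lemma commute_pow_left_of_mul_eq_smul_sub {n : ℕ} (h : a * b = c • (b * a) - q)
    (hq : q * a = d • (a * q)) (hc : c ^ n = 1) (hd : d ^ n = 1) (hcd : c * d ≠ 1) :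
    Commute (a ^ n) b := by
  cases n with
  | zero => rw [pow_zero]; exact Commute.one_left b
  | succ m =>
    rw [Commute, SemiconjBy, pow_succ_mul_eq_smul_mul_pow_sub h hq, hc,
      geom_sum_eq_zero_of_pow_eq_one (by rw [mul_pow, hc, hd, one_mul]) hcd, one_smul, zero_smul,
      sub_zero]

lemma commute_pow_right_of_mul_eq_smul_sub {n : ℕ} (h : a * b = c • (b * a) - q)
    (hq : b * q = d • (q * b)) (hc : c ^ n = 1) (hd : d ^ n = 1) (hcd : c * d ≠ 1) :
    Commute a (b ^ n) := by
  cases n with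
  | zero => rw [pow_zero]; exact Commute.one_right a
  | succ m =>
    rw [Commute, SemiconjBy, mul_pow_succ_eq_smul_pow_mul_sub h hq, hc,
      geom_sum_eq_zero_of_pow_eq_one (by rw [mul_pow, hc, hd, one_mul]) hcd, one_smul, zero_smul,
      sub_zero]

end TwistedCommutation

lemma RingQuot.mem_center_of_commute_mkAlgHom_ι {R X : Type*} [CommSemiring R]
    {r : FreeAlgebra R X → FreeAlgebra R X → Prop} {u : RingQuot r}
    (h : ∀ i, Commute (RingQuot.mkAlgHom R r (FreeAlgebra.ι R i)) u) :
    u ∈ Subalgebra.center R (RingQuot r) := by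
  rw [Subalgebra.mem_center_iff]
  intro v
  obtain ⟨f, rfl⟩ := RingQuot.mkAlgHom_surjective R r v
  induction f with
  | grade0 s => rw [AlgHom.commutes]; exact Algebra.commutes s u
  | grade1 i => exact h i
  | mul f g hf hg => rw [map_mul, mul_assoc, hg, ← mul_assoc, hf, mul_assoc]
  | add f g hf hg => rw [map_add, add_mul, mul_add, hf, hg]

section TypeS'

variable {k : Type} [Field k] {α : k} {n : ℕ}

lemma SX_mul_SY : SX α * SY α = α • (SY α * SX α) := by
  simpa [SX, SY] using RingQuot.mkAlgHom_rel k (SRel.g3 (α := α))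

lemma SZ_mul_SX : SZ α * SX α = α • (SX α * SZ α) := by
  simpa [SX, SZ] using RingQuot.mkAlgHom_rel k (SRel.g2 (α := α))

lemma SY_mul_SZ : SY α * SZ α = α • (SZ α * SY α) - SX α ^ 2 := by
  simpa [SX, SY, SZ, sq] using RingQuot.mkAlgHom_rel k (SRel.g1 (α := α))

lemma mem_center_of_commute_SX_SY_SZ {u : RingQuot (SRel α)} (hx : Commute (SX α) u)
    (hy : Commute (SY α) u) (hz : Commute (SZ α) u) :
    u ∈ Subalgebra.center k (RingQuot (SRel α)) := by
  refine RingQuot.mem_center_of_commute_mkAlgHom_ι fun i => ?_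
  fin_cases i
  exacts [hx, hy, hz]

lemma SX_pow_mem_center (hα : α ^ n = 1) : SX α ^ n ∈ Subalgebra.center k (RingQuot (SRel α)) :=
  mem_center_of_commute_SX_SY_SZ (Commute.self_pow _ n)
    (commute_pow_left_of_mul_eq_smul SX_mul_SY hα).symm
    (commute_pow_right_of_mul_eq_smul SZ_mul_SX hα)

lemma SY_pow_mem_center (hα : α ^ n = 1) (hα3 : α ^ 3 ≠ 1) :
    SY α ^ n ∈ Subalgebra.center k (RingQuot (SRel α)) :=
  mem_center_of_commute_SX_SY_SZ (commute_pow_right_of_mul_eq_smul SX_mul_SY hα)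
    (Commute.self_pow _ n)
    (commute_pow_left_of_mul_eq_smul_sub SY_mul_SZ (pow_mul_eq_smul_mul_pow SX_mul_SY 2) hα
      (by rw [pow_right_comm, hα, one_pow]) (by rwa [← pow_succ'])).symm

lemma SZ_pow_mem_center (hα : α ^ n = 1) (hα3 : α ^ 3 ≠ 1) :
    SZ α ^ n ∈ Subalgebra.center k (RingQuot (SRel α)) :=
  mem_center_of_commute_SX_SY_SZ (commute_pow_left_of_mul_eq_smul SZ_mul_SX hα).symm
    (commute_pow_right_of_mul_eq_smul_sub SY_mul_SZ (mul_pow_eq_smul_pow_mul SZ_mul_SX 2) hα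
      (by rw [pow_right_comm, hα, one_pow]) (by rwa [← pow_succ']))
    (Commute.self_pow _ n)

end TypeS'

theorem stmt5_general {k : Type} [Field k] (α : k) (ℓ : ℕ)
    (hprim : IsPrimitiveRoot α ℓ) (hα3 : α ^ 3 ≠ 1) :
    (SX α) ^ ℓ ∈ Subalgebra.center k (RingQuot (SRel α)) ∧
    (SY α) ^ ℓ ∈ Subalgebra.center k (RingQuot (SRel α)) ∧
    (SZ α) ^ ℓ ∈ Subalgebra.center k (RingQuot (SRel α)) :=
  ⟨SX_pow_mem_center hprim.pow_eq_one, SY_pow_mem_center hprim.pow_eq_one hα3,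
    SZ_pow_mem_center hprim.pow_eq_one hα3⟩

theorem stmt5 {k : Type} [Field k] [IsAlgClosed k] [CharZero k] (α : k) (ℓ : ℕ)
    (hprim : IsPrimitiveRoot α ℓ) (hα3 : α ^ 3 ≠ 1) :
    (SX α) ^ ℓ ∈ Subalgebra.center k (RingQuot (SRel α)) ∧
    (SY α) ^ ℓ ∈ Subalgebra.center k (RingQuot (SRel α)) ∧
    (SZ α) ^ ℓ ∈ Subalgebra.center k (RingQuot (SRel α)) :=
  stmt5_general α ℓ hprim hα3
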